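/- Let C be a free semi-theory, P the initial semi-theory, and J_C : P → C the unique morphism of semi-theories. For Y : P → SSet, the left Kan extension (J_C)_* Y of Y along J_C satisfies, for every n ≥ 1, a natural isomorphism (J_C)_* Y[n] ≅ Y[n] ⊔ ∐_{φ ∈ C_n} Y[m_φ], where C_n is the set of all morphisms φ : [m_φ] → [n] of C whose decomposition φ = α_k ∘ … ∘ α_1 into free generators has α_1 not a projection. -/

import Mathlib

open CategoryTheory Limits Topology Topology.Homotopy

noncomputable section

namespace SemiThPaper

/-! ### Weak homotopy equivalences -/

/-- The map induced by a continuous map on homotopy "groups" (sets for `N = Fin 0`). -/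
def HomotopyGroup.map {X Y : Type} [TopologicalSpace X] [TopologicalSpace Y]
    (f : C(X, Y)) (N : Type) (x : X) :
    HomotopyGroup N X x → HomotopyGroup N Y (f x) :=
  Quotient.map
    (fun g => ⟨f.comp g.1, fun y hy => by
      simp only [ContinuousMap.comp_apply]
      rw [g.2 y hy]⟩)
    (fun g h H => H.elim fun H => ⟨H.compContinuousMap f⟩)

/-- The map induced on path components. -/
def ZerothHomotopy.map {X Y : Type} [TopologicalSpace X] [TopologicalSpace Y]
    (f : C(X, Y)) : ZerothHomotopy X → ZerothHomotopy Y :=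
  Quotient.map f (fun _ _ h => h.elim fun γ => ⟨γ.map f.continuous⟩)

/-- A weak homotopy equivalence of topological spaces: a continuous map inducing a
bijection on path components and on all homotopy groups at all basepoints. -/
def IsWeakHomotopyEquiv {X Y : TopCat} (f : X ⟶ Y) : Prop :=
  Function.Bijective (ZerothHomotopy.map (f.hom : C(X, Y))) ∧
    ∀ (n : ℕ) (x : X), Function.Bijective (HomotopyGroup.map (f.hom : C(X, Y)) (Fin n) x)

/-- A weak equivalence of simplicial sets: a map whose geometric realization is a
weak homotopy equivalence. -/
def WeakEquiv {A B : SSet} (f : A ⟶ B) : Prop :=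
  IsWeakHomotopyEquiv (SSet.toTop.map f)


/-! ### Semi-theories -/

/-- The objects `[1], [2], [3], …` of a semi-theory, indexed by positive integers. -/
@[ext]
structure Ob : Type where
  val : ℕ+

instance : Coe ℕ+ Ob := ⟨Ob.mk⟩

/-- An (unpointed) semi-theory: a category with objects `[1], [2], …`
together with distinguished projection morphisms `p^n_k : [n] ⟶ [1]`, where `p^1_1 = 𝟙 [1]`. -/
structure SemiTheory : Type 1 where
  cat : Category.{0, 0} Ob
  proj : ∀ n : ℕ+, Fin n → @Quiver.Hom Ob cat.toCategoryStruct.toQuiver ⟨n⟩ ⟨1⟩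
  proj_one : proj 1 ⟨0, Nat.one_pos⟩ = cat.toCategoryStruct.id ⟨1⟩

/-- The category of diagrams of simplicial sets over (the underlying category of)
a semi-theory. -/
abbrev SemiTheory.Diag (S : SemiTheory) : Type 1 :=
  @CategoryTheory.Functor Ob S.cat SSet _

/-- The `n`-fold levelwise power of a simplicial set. -/
@[simps]
def finPow (n : ℕ+) (A : SSet) : SSet where
  obj m := Fin n → A.obj m
  map θ := ↾fun a k => A.map θ (a k)

/-- The canonical comparison map `X[n] ⟶ X[1]^n` of a diagram over a semi-theory,
whose components are induced by the projections. -/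
def SemiTheory.projFan (S : SemiTheory) (X : S.Diag) (n : ℕ+) :
    (letI := S.cat; (X.obj ⟨n⟩ ⟶ finPow n (X.obj ⟨1⟩))) :=
  letI := S.cat
  { app := fun m => ↾fun a k => (X.map (S.proj n k)).app m a
    naturality := fun m m' θ => by
      ext a
      funext k
      exact ConcreteCategory.congr_hom ((X.map (S.proj n k)).naturality θ) a }

/-- A strict algebra over a semi-theory: the comparison maps `X[n] ⟶ X[1]^n` are
isomorphisms for all `n > 1`. -/
def SemiTheory.IsStrictAlgebra (S : SemiTheory) (X : S.Diag) : Prop :=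
  ∀ n : ℕ+, 1 < (n : ℕ) → IsIso (S.projFan X n)

/-- A homotopy algebra over a semi-theory: the comparison maps `X[n] ⟶ X[1]^n` are
weak equivalences of simplicial sets for all `n > 1`. -/
def SemiTheory.IsHomotopyAlgebra (S : SemiTheory) (X : S.Diag) : Prop :=
  ∀ n : ℕ+, 1 < (n : ℕ) → WeakEquiv (S.projFan X n)

/-- A semi-theory is an algebraic theory if composition with the projections induces
bijections `Hom([m],[n]) ≅ Hom([m],[1])^n` for all `m` and all `n > 1`. -/
def SemiTheory.IsAlgebraic (S : SemiTheory) : Prop :=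
  letI := S.cat
  ∀ (m n : ℕ+), 1 < (n : ℕ) →
    Function.Bijective (fun (f : (⟨m⟩ : Ob) ⟶ ⟨n⟩) (k : Fin n) => f ≫ S.proj n k)

/-- The comparison map `X[n] ⟶ X[1]^n` for a diagram of simplicial sets over any
category equipped with objects `[n]` and projection morphisms. -/
def projFanAt {C : Type} [Category.{0} C] (o : ℕ+ → C) (p : ∀ n : ℕ+, Fin n → (o n ⟶ o 1))
    (X : C ⥤ SSet) (n : ℕ+) : X.obj (o n) ⟶ finPow n (X.obj (o 1)) where
  app m := ↾fun a k => (X.map (p n k)).app m a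
  naturality m m' θ := by
    ext a
    funext k
    exact ConcreteCategory.congr_hom ((X.map (p n k)).naturality θ) a

/-- Strictness of a diagram with respect to given objects and projections. -/
def IsStrictAt {C : Type} [Category.{0} C] (o : ℕ+ → C)
    (p : ∀ n : ℕ+, Fin n → (o n ⟶ o 1)) (X : C ⥤ SSet) : Prop :=
  ∀ n : ℕ+, 1 < (n : ℕ) → IsIso (projFanAt o p X n)

/-- The homotopy-algebra condition for a diagram with respect to given objects
and projections. -/
def IsHomotopyAt {C : Type} [Category.{0} C] (o : ℕ+ → C)
    (p : ∀ n : ℕ+, Fin n → (o n ⟶ o 1)) (X : C ⥤ SSet) : Prop :=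
  ∀ n : ℕ+, 1 < (n : ℕ) → WeakEquiv (projFanAt o p X n)

/-! ### Free semi-theories -/

/-- Generating data for a free semi-theory: a family of free generators that are
not projections (the projections are added separately as free generators). -/
structure GenData : Type 1 where
  gen : ℕ+ → ℕ+ → Type

/-- The generating quiver of the free semi-theory on `G`: the generators of `G`
together with projection arrows `p^n_k : [n] → [1]` for `n > 1`
(the projection `p^1_1` is the identity, i.e. the empty path). -/
inductive Arr (G : GenData) : ℕ+ → ℕ+ → Type
  | gen {a b : ℕ+} : G.gen a b → Arr G a b
  | proj {n : ℕ+} (h : 1 < (n : ℕ)) (k : Fin n) : Arr G n 1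

/-- The object type of the free semi-theory on `G` (a copy of `Ob`). -/
def FreeOb (G : GenData) : Type := Ob

instance freeQuiver (G : GenData) : Quiver (FreeOb G) :=
  ⟨fun a b => Arr G (Ob.val a) (Ob.val b)⟩

/-- The free semi-theory on `G`, as a category: the paths category on the
generating quiver. -/
abbrev FreeST (G : GenData) := CategoryTheory.Paths (FreeOb G)

/-- The object `[n]` of the free semi-theory. -/
def FreeST.of (G : GenData) (n : ℕ+) : FreeST G := (⟨n⟩ : Ob)

/-- The generating projection arrow, as an arrow of the generating quiver. -/
def projArr (G : GenData) {n : ℕ+} (h : 1 < (n : ℕ)) (k : Fin n) :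
    @Quiver.Hom (FreeOb G) _ (FreeST.of G n) (FreeST.of G 1) := Arr.proj h k

/-- The projection `p^n_k` in the free semi-theory. -/
def projPath (G : GenData) (n : ℕ+) (k : Fin n) : FreeST.of G n ⟶ FreeST.of G 1 :=
  if h : 1 < (n : ℕ) then (projArr G h k).toPath
  else eqToHom (congrArg (FreeST.of G)
    (PNat.coe_injective (by
      rw [PNat.one_coe]
      exact le_antisymm (not_lt.1 h) n.pos)))

/-- The free semi-theory on `G`, as a semi-theory. -/
def freeSemiTheory (G : GenData) : SemiTheory where
  cat := inferInstanceAs (Category (FreeST G))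
  proj n k := projPath G n k
  proj_one := by
    show projPath G 1 ⟨0, Nat.one_pos⟩ = _
    rw [projPath, dif_neg (by norm_num)]
    rfl

/-- The initial semi-theory `P` has no generators besides the projections. -/
def emptyGen : GenData := ⟨fun _ _ => PEmpty⟩

/-- The underlying category of the initial semi-theory `P`. -/
abbrev PCat := FreeST emptyGen

/-- The initial semi-theory `P`: its only non-identity morphisms are the projections. -/
def PTheory : SemiTheory := freeSemiTheory emptyGen

/-- The action of the unique morphism of semi-theories `P ⟶ C` on generating arrows. -/
def jArr (G : GenData) : ∀ {a b : ℕ+}, Arr emptyGen a b →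
    @Quiver.Path (FreeOb G) _ ((⟨a⟩ : Ob) : FreeST G) ((⟨b⟩ : Ob) : FreeST G)
  | _, _, .gen α => α.elim
  | _, _, .proj h k => (projArr G h k).toPath

/-- The unique morphism of semi-theories `P ⟶ C` into a free semi-theory. -/
def Jfree (G : GenData) : PCat ⥤ FreeST G :=
  Paths.lift
    { obj := fun n => (n : FreeST G)
      map := fun {a b} e => jArr G e }

/-! ### The completion of a free semi-theory -/

/-- Trees representing the morphisms `[n] ⟶ [1]` of the completion `C̄` of a free
semi-theory: either a single edge labelled by a projection `p^n_k`, or a tree whose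
lowest edge is labelled by a component `α_i` of a non-projection generator
`α : [m] ⟶ [r]` and which is obtained by grafting `m` smaller trees. -/
inductive CTree (G : GenData) (n : ℕ+) : Type
  | proj (k : Fin n) : CTree G n
  | node {m r : ℕ+} (α : G.gen m r) (i : Fin r) (ts : Fin m → CTree G n) : CTree G n

/-- Morphisms `[n] ⟶ [m]` in the completion: `m`-tuples of trees. -/
def CompHom (G : GenData) (n m : ℕ+) : Type := Fin m → CTree G n

/-- Grafting: substituting the trees `T k` for the initial edges labelled `p^m_k`. -/
def CTree.graft {G : GenData} {n m : ℕ+} : CTree G m → CompHom G n m → CTree G n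
  | .proj k, T => T k
  | .node α i ts, T => .node α i (fun j => (ts j).graft T)

/-- The identity of the completion. -/
def compId (G : GenData) (n : ℕ+) : CompHom G n n := fun k => .proj k

/-- Composition in the completion, by grafting. -/
def compComp {G : GenData} {a b c : ℕ+} (T : CompHom G a b) (S : CompHom G b c) :
    CompHom G a c :=
  fun j => (S j).graft T

theorem CTree.graft_id {G : GenData} {m : ℕ+} (t : CTree G m) :
    t.graft (compId G m) = t := by
  induction t with
  | proj k => rfl
  | node α i ts ih =>
      simp only [CTree.graft]
      congr 1
      funext j
      exact ih j

theorem CTree.graft_graft {G : GenData} {a b c : ℕ+} (s : CTree G c)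
    (U : CompHom G b c) (T : CompHom G a b) :
    (s.graft U).graft T = s.graft (compComp T U) := by
  induction s with
  | proj k => rfl
  | node α i ts ih =>
      simp only [CTree.graft]
      congr 1
      funext j
      exact ih j

/-- The object type of the completion (a copy of `Ob`). -/
def CompOb (G : GenData) : Type := Ob

/-- The completion `C̄` of a free semi-theory, as a category. -/
instance compCategory (G : GenData) : Category (CompOb G) where
  Hom n m := CompHom G (Ob.val n) (Ob.val m)
  id n := compId G _
  comp f g := compComp f g
  id_comp f := funext fun j => CTree.graft_id _
  comp_id f := rfl
  assoc f g h := funext fun j => (CTree.graft_graft _ _ _).symm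

/-- The object `[n]` of the completion. -/
def CompOb.of (G : GenData) (n : ℕ+) : CompOb G := (⟨n⟩ : Ob)

/-- The projection `p̂^n_k` of the completion: a single edge labelled `p^n_k`. -/
def compProj (G : GenData) (n : ℕ+) (k : Fin n) : CompOb.of G n ⟶ CompOb.of G 1 :=
  fun _ => .proj k

/-- The completion, as a semi-theory. -/
def compSemiTheory (G : GenData) : SemiTheory where
  cat := inferInstanceAs (Category (CompOb G))
  proj n k := compProj G n k
  proj_one := by
    funext i
    have h0 : i = ⟨0, Nat.one_pos⟩ := Fin.ext (Nat.lt_one_iff.mp i.isLt)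
    rw [h0]
    rfl

/-- The completion functor `Φ` on generating arrows. -/
def phiArr (G : GenData) : ∀ {a b : ℕ+}, Arr G a b → CompHom G a b
  | _, _, .gen α => fun i => .node α i (fun k => .proj k)
  | _, _, .proj _ k => fun _ => .proj k

/-- The completion functor `Φ_C : C ⟶ C̄` of a free semi-theory. -/
def phi (G : GenData) : FreeST G ⥤ CompOb G :=
  Paths.lift
    { obj := fun n => (n : CompOb G)
      map := fun {a b} e => phiArr G e }

/-! ### Discrete simplicial sets, products, mapping complexes -/

/-- The discrete simplicial set on a type. -/
@[simps]
def disc (A : Type) : SSet where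
  obj _ := A
  map _ := ↾id

/-- The map of discrete simplicial sets induced by a function. -/
@[simps]
def disc.map {A B : Type} (f : A → B) : disc A ⟶ disc B where
  app _ := ↾f

/-- The diagram of (discrete) simplicial sets corepresented by the object `[n]`
of a semi-theory. -/
def SemiTheory.corep (S : SemiTheory) (n : ℕ+) : S.Diag :=
  letI := S.cat
  { obj := fun m => disc ((⟨n⟩ : Ob) ⟶ m)
    map := fun f => disc.map (fun g => g ≫ f)
    map_id := fun m => by
      apply NatTrans.ext
      ext x g
      change ((⟨n⟩ : Ob) ⟶ m) at g
      show g ≫ 𝟙 m = g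
      simp
    map_comp := fun f f' => by
      apply NatTrans.ext
      ext x g
      change ((⟨n⟩ : Ob) ⟶ _) at g
      show g ≫ (_ ≫ _) = _
      rw [← Category.assoc]
      rfl }

/-- Levelwise product of two simplicial sets. -/
@[simps]
def mulC (A K : SSet) : SSet where
  obj m := A.obj m × K.obj m
  map θ := ↾fun p => (A.map θ p.1, K.map θ p.2)
  map_id m := by apply ConcreteCategory.hom_ext; intro p; simp
  map_comp f g := by apply ConcreteCategory.hom_ext; intro p; simp

/-- `f × id` on levelwise products. -/
@[simps]
def mulC.mapLeft {A B : SSet} (f : A ⟶ B) (K : SSet) : mulC A K ⟶ mulC B K where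
  app m := ↾fun p => (f.app m p.1, p.2)
  naturality m m' θ := by
    apply ConcreteCategory.hom_ext; intro p
    simp only [mulC_obj, mulC_map, types_comp_apply]
    exact Prod.ext (by exact NatTrans.naturality_apply f θ p.1) rfl

/-- `id × g` on levelwise products. -/
@[simps]
def mulC.mapRight (A : SSet) {K L : SSet} (g : K ⟶ L) : mulC A K ⟶ mulC A L where
  app m := ↾fun p => (p.1, g.app m p.2)
  naturality m m' θ := by
    apply ConcreteCategory.hom_ext; intro p
    simp only [mulC_obj, mulC_map, types_comp_apply]
    exact Prod.ext rfl (by exact NatTrans.naturality_apply g θ p.2)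

theorem mulC.mapRight_id (A K : SSet) : mulC.mapRight A (𝟙 K) = 𝟙 (mulC A K) := by
  apply NatTrans.ext; ext x p; rfl

theorem mulC.mapRight_comp (A : SSet) {K L M : SSet} (g : K ⟶ L) (h : L ⟶ M) :
    mulC.mapRight A (g ≫ h) = mulC.mapRight A g ≫ mulC.mapRight A h := by
  apply NatTrans.ext; ext x p; rfl

/-- Naturality, in applied form. -/
theorem natApply {C : Type} [Category C] {X Y : C ⥤ SSet} (f : X ⟶ Y)
    {c c' : C} (φ : c ⟶ c') (x : SimplexCategoryᵒᵖ) (a : (X.obj c).obj x) :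
    (f.app c').app x ((X.map φ).app x a) = (Y.map φ).app x ((f.app c).app x a) :=
  ConcreteCategory.congr_hom (NatTrans.congr_app (f.naturality φ) x) a

/-- The objectwise product of a diagram of simplicial sets with a constant
simplicial set. -/
@[simps]
def prodConst {C : Type} [Category C] (X : C ⥤ SSet) (K : SSet) : C ⥤ SSet where
  obj c := mulC (X.obj c) K
  map f := mulC.mapLeft (X.map f) K
  map_id c := by
    apply NatTrans.ext; ext x p
    show ((X.map (𝟙 c)).app x p.1, p.2) = p
    rw [X.map_id]
    rfl
  map_comp f g := by
    apply NatTrans.ext; ext x p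
    show ((X.map (f ≫ g)).app x p.1, p.2) = _
    rw [X.map_comp]
    rfl

/-- Functoriality of `prodConst` in the diagram variable. -/
@[simps]
def prodConst.mapX {C : Type} [Category C] {X X' : C ⥤ SSet} (f : X ⟶ X') (K : SSet) :
    prodConst X K ⟶ prodConst X' K where
  app c := mulC.mapLeft (f.app c) K
  naturality c c' φ := by
    apply NatTrans.ext; ext x p
    simp only [prodConst_obj, prodConst_map, NatTrans.comp_app, mulC.mapLeft_app,
      types_comp_apply]
    exact Prod.ext (natApply f φ x p.1) rfl

/-- Functoriality of `prodConst` in the constant variable. -/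
@[simps]
def prodConst.mapK {C : Type} [Category C] (X : C ⥤ SSet) {K L : SSet} (g : K ⟶ L) :
    prodConst X K ⟶ prodConst X L where
  app c := mulC.mapRight (X.obj c) g
  naturality c c' φ := by
    apply NatTrans.ext; ext x p
    rfl

theorem prodConst.mapK_id {C : Type} [Category C] (X : C ⥤ SSet) (K : SSet) :
    prodConst.mapK X (𝟙 K) = 𝟙 (prodConst X K) := by
  apply NatTrans.ext; funext c
  exact mulC.mapRight_id _ _

theorem prodConst.mapK_comp {C : Type} [Category C] (X : C ⥤ SSet) {K L M : SSet}
    (g : K ⟶ L) (h : L ⟶ M) :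
    prodConst.mapK X (g ≫ h) = prodConst.mapK X g ≫ prodConst.mapK X h := by
  apply NatTrans.ext; funext c
  exact mulC.mapRight_comp _ _ _

/-- The standard simplex `Δ[k]`, for `k : SimplexCategoryᵒᵖ`. -/
def stdS (k : SimplexCategoryᵒᵖ) : SSet := SSet.stdSimplex.obj k.unop

/-- Functoriality of the standard simplex (contravariantly in `SimplexCategoryᵒᵖ`). -/
def stdMap {k l : SimplexCategoryᵒᵖ} (θ : k ⟶ l) : stdS l ⟶ stdS k :=
  SSet.stdSimplex.map θ.unop

theorem stdMap_id (k : SimplexCategoryᵒᵖ) : stdMap (𝟙 k) = 𝟙 (stdS k) :=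
  SSet.stdSimplex.map_id _

theorem stdMap_comp {k l m : SimplexCategoryᵒᵖ} (θ : k ⟶ l) (η : l ⟶ m) :
    stdMap (θ ≫ η) = stdMap η ≫ stdMap θ :=
  SSet.stdSimplex.map_comp _ _

/-- The simplicial mapping complex of two diagrams of simplicial sets: its
`m`-simplices are the natural transformations `X × Δ[m] ⟶ Y`. -/
def MapCx {C : Type} [Category C] (X Y : C ⥤ SSet) : SSet where
  obj m := prodConst X (stdS m) ⟶ Y
  map {m m'} θ := ↾fun t => prodConst.mapK X (stdMap θ) ≫ t
  map_id m := by
    apply ConcreteCategory.hom_ext; intro t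
    simp [stdMap_id, prodConst.mapK_id]
  map_comp θ η := by
    apply ConcreteCategory.hom_ext; intro t
    simp [stdMap_comp, prodConst.mapK_comp]

/-- Precomposition on mapping complexes. -/
def MapCx.pre {C : Type} [Category C] {X X' : C ⥤ SSet} (f : X' ⟶ X) (Y : C ⥤ SSet) :
    MapCx X Y ⟶ MapCx X' Y where
  app m := ↾fun t => prodConst.mapX f (stdS m) ≫ t
  naturality m m' θ := by
    apply ConcreteCategory.hom_ext; intro t
    rfl

/-- Postcomposition on mapping complexes. -/
def MapCx.post {C : Type} [Category C] (X : C ⥤ SSet) {Y Y' : C ⥤ SSet} (g : Y ⟶ Y') :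
    MapCx X Y ⟶ MapCx X Y' where
  app m := ↾fun t => t ≫ g
  naturality m m' θ := by
    apply ConcreteCategory.hom_ext; intro t
    rfl

/-- Restriction of mapping complexes along a functor. -/
def MapCx.whisk {C D : Type} [Category C] [Category D] (F : D ⥤ C) (X Y : C ⥤ SSet) :
    MapCx X Y ⟶ MapCx (F ⋙ X) (F ⋙ Y) where
  app m := ↾fun t =>
    (show prodConst (F ⋙ X) (stdS m) ⟶ F ⋙ Y from Functor.whiskerLeft F t)
  naturality m m' θ := by
    apply ConcreteCategory.hom_ext; intro t
    rfl

/-- The simplicial mapping complex of two simplicial sets: its `m`-simplices are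
the maps `A × Δ[m] ⟶ B`. -/
def sMap (A B : SSet) : SSet where
  obj m := mulC A (stdS m) ⟶ B
  map {m m'} θ := ↾fun t => mulC.mapRight A (stdMap θ) ≫ t
  map_id m := by
    apply ConcreteCategory.hom_ext; intro t
    simp [stdMap_id, mulC.mapRight_id]
  map_comp θ η := by
    apply ConcreteCategory.hom_ext; intro t
    simp [stdMap_comp, mulC.mapRight_comp]

/-- Precomposition on simplicial mapping complexes. -/
def sMap.pre {A A' : SSet} (f : A' ⟶ A) (B : SSet) : sMap A B ⟶ sMap A' B where
  app m := ↾fun t => mulC.mapLeft f (stdS m) ≫ t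
  naturality m m' θ := by
    apply ConcreteCategory.hom_ext; intro t
    rfl

/-- Postcomposition on simplicial mapping complexes. -/
def sMap.post (A : SSet) {B B' : SSet} (g : B ⟶ B') : sMap A B ⟶ sMap A B' where
  app m := ↾fun t => t ≫ g
  naturality m m' θ := by
    apply ConcreteCategory.hom_ext; intro t
    rfl

/-! ### Decompositions of morphisms of a free semi-theory -/

/-- Whether a generating arrow is a generator of `G` (as opposed to a projection). -/
def Arr.isGen {G : GenData} : ∀ {a b : ℕ+}, Arr G a b → Prop
  | _, _, .gen _ => True
  | _, _, .proj _ _ => False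

/-- A morphism `φ = α_k ∘ ⋯ ∘ α_1` of a free semi-theory (a path in the generating
quiver) starts with a non-projection: `α_1` is not a projection. -/
def startsNonProj {G : GenData} : ∀ {a b : FreeOb G}, Quiver.Path a b → Prop
  | _, _, .nil => False
  | _, _, .cons .nil e => Arr.isGen e
  | _, _, .cons (.cons p e') _ => startsNonProj (Quiver.Path.cons p e')

/-- The first `j` arrows of a path (together with their target). -/
def pathTake {V : Type} [Quiver.{1} V] {a : V} : ∀ {b : V}, Quiver.Path a b → ℕ → Σ c : V, Quiver.Path a c
  | _, .nil, _ => ⟨a, .nil⟩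
  | b, .cons p e, j => if j ≤ p.length then pathTake p j else ⟨b, .cons p e⟩

/-! ### The diagram `D̄_n` and its filtrations -/

/-- The `D`-diagram `D̄_n` with `D̄_n[m] = Hom_{D̄}([n],[m])`, where the `D`-action
is given by composition via the completion functor `Φ`. -/
def barDn (G : GenData) (n : ℕ+) : FreeST G ⥤ SSet where
  obj m := disc (CompOb.of G n ⟶ (phi G).obj m)
  map {a b} ψ := disc.map (fun T => T ≫ (phi G).map ψ)
  map_id a := by
    apply NatTrans.ext
    ext x T
    change (CompOb.of G n ⟶ (phi G).obj a) at T
    show T ≫ (phi G).map (𝟙 a) = T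
    rw [CategoryTheory.Functor.map_id]; exact Category.comp_id _
  map_comp {a b c} ψ ψ' := by
    apply NatTrans.ext
    ext x T
    change (CompOb.of G n ⟶ (phi G).obj a) at T
    show T ≫ (phi G).map (ψ ≫ ψ') = (T ≫ (phi G).map ψ) ≫ (phi G).map ψ'
    rw [CategoryTheory.Functor.map_comp]; exact (Category.assoc _ _ _).symm

/-- The filtration of `D̄_n` by sub-`D`-diagrams:
`D̄_n^0 = D_n` (the image of the corepresented diagram) and `D̄_n^{k+1}` is the
smallest sub-`D`-diagram containing all tuples of elements of `D̄_n^k[1]`. -/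
def Filt (G : GenData) (n : ℕ+) : ℕ → ∀ m : ℕ+, Set (CompHom G n m)
  | 0, m => {T | ∃ ψ : FreeST.of G n ⟶ FreeST.of G m, T = (phi G).map ψ}
  | k+1, m => {T | ∃ (m' : ℕ+) (S : CompHom G n m')
      (ψ : FreeST.of G m' ⟶ FreeST.of G m),
      (∀ j : Fin m', (fun _ : Fin 1 => S j) ∈ Filt G n k 1) ∧
        T = (S : CompOb.of G n ⟶ CompOb.of G m') ≫ (phi G).map ψ}

/-- The filtration of `D̄_n` by sub-`P`-diagrams: `sD̄_n^0 = D_n` and `sD̄_n^{k+1}` is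
the smallest sub-`P`-diagram containing all tuples of elements of `D̄ₙ^k[1]`. -/
def sFilt (G : GenData) (n : ℕ+) : ℕ → ∀ m : ℕ+, Set (CompHom G n m)
  | 0, m => Filt G n 0 m
  | k+1, m => {T | ∀ j : Fin m, (fun _ : Fin 1 => T j) ∈ Filt G n k 1}

theorem Filt.closed (G : GenData) (n : ℕ+) (k : ℕ) {a b : ℕ+}
    {T : CompOb.of G n ⟶ CompOb.of G a} (hT : T ∈ Filt G n k a)
    (ψ : FreeST.of G a ⟶ FreeST.of G b) : T ≫ (phi G).map ψ ∈ Filt G n k b := by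
  cases k with
  | zero =>
      obtain ⟨ψ₀, rfl⟩ := hT
      exact ⟨ψ₀ ≫ ψ, by rw [CategoryTheory.Functor.map_comp]; rfl⟩
  | succ k =>
      obtain ⟨m', S, ψ₁, hS, rfl⟩ := hT
      exact ⟨m', S, ψ₁ ≫ ψ, hS, by
          rw [CategoryTheory.Functor.map_comp]; exact Category.assoc _ _ _⟩

theorem phi_map_toPath (G : GenData) {a b : FreeOb G}
    (e : @Quiver.Hom (FreeOb G) _ a b) :
    (phi G).map e.toPath = phiArr G e :=
  Paths.lift_toPath _ _

theorem Filt.comp_proj (G : GenData) (n : ℕ+) (k : ℕ) {m : ℕ+} {T : CompHom G n m}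
    (hT : T ∈ Filt G n k m) (j : Fin m) : (fun _ : Fin 1 => T j) ∈ Filt G n k 1 := by
  by_cases h : 1 < (m : ℕ)
  · have hc := Filt.closed G n k hT (projPath G m j)
    have he : (T : CompOb.of G n ⟶ CompOb.of G m) ≫ (phi G).map (projPath G m j)
        = (fun _ : Fin 1 => T j) := by
      unfold projPath
      rw [dif_pos h]
      rw [phi_map_toPath G (projArr G h j)]
      rfl
    exact (congrArg (fun X => X ∈ Filt G n k 1) he).mp hc
  · have hm : m = 1 := PNat.coe_injective (by
      rw [PNat.one_coe]
      exact le_antisymm (not_lt.1 h) m.pos)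
    subst hm
    have ht : (fun _ : Fin 1 => T j) = T := by
      funext i
      congr 1
      exact Fin.ext (by
        rw [Nat.lt_one_iff.mp i.isLt, Nat.lt_one_iff.mp j.isLt])
    rwa [ht]

theorem sFilt.closed_arr (G : GenData) (n : ℕ+) (k : ℕ) {c b : ℕ+}
    {T : CompHom G n c} (hT : T ∈ sFilt G n k c) (e : Arr emptyGen c b) :
    (T : CompOb.of G n ⟶ CompOb.of G c) ≫ (phi G).map (jArr G e) ∈ sFilt G n k b := by
  cases e with
  | gen α => exact α.elim
  | proj h j =>
      have h1 : (phi G).map (jArr G (Arr.proj h j)) = phiArr G (Arr.proj h j) := by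
        show (phi G).map (projArr G h j).toPath = _
        exact phi_map_toPath G _
      rw [h1]
      show (fun _ : Fin 1 => T j) ∈ sFilt G n k 1
      cases k with
      | zero => exact Filt.comp_proj G n 0 hT j
      | succ k' => intro i; exact hT j

theorem sFilt.closed (G : GenData) (n : ℕ+) (k : ℕ) {a b : PCat}
    {T : CompOb.of G n ⟶ CompOb.of G (Ob.val a)} (hT : T ∈ sFilt G n k (Ob.val a))
    (ψ : a ⟶ b) :
    T ≫ (phi G).map ((Jfree G).map ψ) ∈ sFilt G n k (Ob.val b) := by
  change @Quiver.Path (FreeOb emptyGen) _ a b at ψ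
  induction ψ with
  | nil => exact hT
  | cons p e ih =>
      have h1 : (phi G).map ((Jfree G).map (Quiver.Path.cons p e))
          = (phi G).map ((Jfree G).map p) ≫ (phi G).map (jArr G e) := by
        have h2 : (Jfree G).map (Quiver.Path.cons p e) = (Jfree G).map p ≫ jArr G e :=
          Paths.lift_cons _ _ _
        exact (congrArg (phi G).map h2).trans ((phi G).map_comp _ _)
      have h3 : T ≫ (phi G).map ((Jfree G).map (Quiver.Path.cons p e)) =
          (T ≫ (phi G).map ((Jfree G).map p)) ≫ (phi G).map (jArr G e) :=
        (congrArg (T ≫ ·) h1).trans (Category.assoc _ _ _).symm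
      exact (congrArg (· ∈ sFilt G n k _) h3).mpr (sFilt.closed_arr G n k ih e)

/-- The sub-`D`-diagram `D̄_n^k` of `D̄_n`. -/
def FiltDiag (G : GenData) (n : ℕ+) (k : ℕ) : FreeST G ⥤ SSet where
  obj m := disc (Filt G n k (Ob.val m))
  map {a b} ψ := disc.map (fun T => ⟨T.1 ≫ (phi G).map ψ, Filt.closed G n k T.2 ψ⟩)
  map_id a := by
    apply NatTrans.ext
    ext x T
    apply Subtype.ext
    show T.1 ≫ (phi G).map (𝟙 a) = T.1
    rw [CategoryTheory.Functor.map_id]; exact Category.comp_id _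
  map_comp {a b c} ψ ψ' := by
    apply NatTrans.ext
    ext x T
    apply Subtype.ext
    show T.1 ≫ (phi G).map (ψ ≫ ψ') = (T.1 ≫ (phi G).map ψ) ≫ (phi G).map ψ'
    rw [CategoryTheory.Functor.map_comp]; exact (Category.assoc _ _ _).symm

/-- The sub-`P`-diagram `sD̄_n^k` of `D̄_n`. -/
def sFiltDiag (G : GenData) (n : ℕ+) (k : ℕ) : PCat ⥤ SSet where
  obj m := disc (sFilt G n k (Ob.val m))
  map {a b} ψ := disc.map (fun T => ⟨T.1 ≫ (phi G).map ((Jfree G).map ψ),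
    sFilt.closed G n k T.2 ψ⟩)
  map_id a := by
    apply NatTrans.ext
    ext x T
    apply Subtype.ext
    show T.1 ≫ (phi G).map ((Jfree G).map (𝟙 a)) = T.1
    rw [CategoryTheory.Functor.map_id, CategoryTheory.Functor.map_id]; exact Category.comp_id _
  map_comp {a b c} ψ ψ' := by
    apply NatTrans.ext
    ext x T
    apply Subtype.ext
    show T.1 ≫ (phi G).map ((Jfree G).map (ψ ≫ ψ')) =
      (T.1 ≫ (phi G).map ((Jfree G).map ψ)) ≫ (phi G).map ((Jfree G).map ψ')
    rw [CategoryTheory.Functor.map_comp, CategoryTheory.Functor.map_comp]; exact (Category.assoc _ _ _).symm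


theorem Filt.mono (G : GenData) (n : ℕ+) (k : ℕ) (m : ℕ+) :
    Filt G n k m ⊆ Filt G n (k+1) m := by
  intro T hT
  exact ⟨m, T, 𝟙 _, fun j => Filt.comp_proj G n k hT j,
    by rw [CategoryTheory.Functor.map_id]; exact (@Category.comp_id (CompOb G) _ (CompOb.of G n) (CompOb.of G m) T).symm⟩

theorem Filt.subset_sFilt (G : GenData) (n : ℕ+) (k : ℕ) (m : ℕ+) :
    Filt G n k m ⊆ sFilt G n (k+1) m :=
  fun _ hT j => Filt.comp_proj G n k hT j

theorem sFilt.subset_Filt (G : GenData) (n : ℕ+) (k : ℕ) (m : ℕ+) :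
    sFilt G n (k+1) m ⊆ Filt G n (k+1) m := by
  intro T hT
  exact ⟨m, T, 𝟙 _, hT, by
    rw [CategoryTheory.Functor.map_id]; exact (@Category.comp_id (CompOb G) _ (CompOb.of G n) (CompOb.of G m) T).symm⟩

/-- Restriction of a `D`-diagram to a `P`-diagram. -/
def resP (G : GenData) (X : FreeST G ⥤ SSet) : PCat ⥤ SSet := Jfree G ⋙ X

/-- The inclusion `D̄_n^k ⟶ D̄_n^{k+1}` of sub-`D`-diagrams. -/
def filtIncl (G : GenData) (n : ℕ+) (k : ℕ) : FiltDiag G n k ⟶ FiltDiag G n (k+1) where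
  app m := disc.map (Set.inclusion (Filt.mono G n k (Ob.val m)))
  naturality a b ψ := by
    apply NatTrans.ext
    ext x T
    apply Subtype.ext
    rfl

/-- The inclusion `D̄_n^k ⟶ sD̄_n^{k+1}` of sub-`P`-diagrams. -/
def filtInclS (G : GenData) (n : ℕ+) (k : ℕ) :
    resP G (FiltDiag G n k) ⟶ sFiltDiag G n (k+1) where
  app m := disc.map (Set.inclusion (Filt.subset_sFilt G n k (Ob.val m)))
  naturality a b ψ := by
    apply NatTrans.ext
    ext x T
    apply Subtype.ext
    rfl

/-- The inclusion `sD̄_n^{k+1} ⟶ D̄_n^{k+1}` of sub-`P`-diagrams. -/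
def sFiltIncl (G : GenData) (n : ℕ+) (k : ℕ) :
    sFiltDiag G n (k+1) ⟶ resP G (FiltDiag G n (k+1)) where
  app m := disc.map (Set.inclusion (sFilt.subset_Filt G n k (Ob.val m)))
  naturality a b ψ := by
    apply NatTrans.ext
    ext x T
    apply Subtype.ext
    rfl

/-! Every morphism `χ : [a] ⟶ [n]` of the free semi-theory `C` is, uniquely, either `J η` or
`J η ≫ φ` with `φ ∈ C_n`: cut the generator decomposition of `χ` just before its first
non-projection. Normalizing a path arrow by arrow computes this decomposition, and normalizing
commutes with precomposition by `J`. So the comma category `J ↓ [n]`, over which the pointwise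
left Kan extension is a colimit, is a disjoint union of components with terminal objects
`([n], 𝟙)` and `([m_φ], φ)`, and its colimit is the coproduct of the values of `Y` at these
objects. -/

section KanExtension

variable {C D H : Type*} [Category* C] [Category* D] [Category* H]

theorem lan_map_app_comp_leftKanExtensionObjIsoColimit_hom (L : C ⥤ D)
    [∀ F : C ⥤ H, L.HasPointwiseLeftKanExtension F] {F F' : C ⥤ H} (f : F ⟶ F') (X : D) :
    (L.lan.map f).app X ≫ (L.leftKanExtensionObjIsoColimit F' X).hom =
      (L.leftKanExtensionObjIsoColimit F X).hom ≫
        colimMap (Functor.whiskerLeft (CostructuredArrow.proj L X) f) := by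
  refine (Iso.inv_comp_eq _).1 (colimit.hom_ext fun g => ?_)
  have hunit : (L.leftKanExtensionUnit F).app g.left ≫ (L.lan.map f).app (L.obj g.left) =
      f.app g.left ≫ (L.leftKanExtensionUnit F').app g.left :=
    (congr_app (L.lanUnit.naturality f) g.left).symm
  erw [Functor.ι_leftKanExtensionObjIsoColimit_inv_assoc, ι_colimMap,
    NatTrans.naturality_assoc, ← Category.assoc, hunit, Category.assoc,
    Functor.ι_leftKanExtensionObjIsoColimit_hom]
  rfl

end KanExtension

/-- Naturality of `s` along a morphism `k ⟶ r i` reduces the universal property to the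
injections `s.ι.app (r i)`. -/
def isColimitOfIsColimitCofanOfNonemptyHom {K C : Type*} [Category* K] [Category* C]
    {F : K ⥤ C} (s : Cocone F) {I : Type*} (r : I → K)
    (hs : IsColimit (Cofan.mk s.pt fun i => s.ι.app (r i)))
    (hr : ∀ k, ∃ i, Nonempty (k ⟶ r i)) : IsColimit s where
  desc t := Cofan.IsColimit.desc hs fun i => t.ι.app (r i)
  fac t k := by
    obtain ⟨i, ⟨ρ⟩⟩ := hr k
    rw [← s.w ρ, Category.assoc]
    erw [Cofan.IsColimit.fac hs _ i]
    exact t.w ρ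
  uniq t m hm := Cofan.IsColimit.hom_ext hs _ _ fun i => by
    erw [Cofan.IsColimit.fac hs _ i]
    exact hm (r i)

section Normalization

variable {G : GenData}

-- `FreeOb G`, `PCat` and `FreeST G` are all `Ob`; the type of an object selects the category
-- in which `⟶` is read.
def FreeOb.toP (a : FreeOb G) : PCat := a

def FreeOb.toST (a : FreeOb G) : FreeST G := a

theorem startsNonProj_toPath {a b : FreeOb G} (e : a ⟶ b) :
    startsNonProj e.toPath ↔ Arr.isGen e := by
  rw [Quiver.Hom.toPath, startsNonProj]

theorem startsNonProj_cons_cons {a b c d : FreeOb G} (p : Quiver.Path a b) (e' : b ⟶ c)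
    (e : c ⟶ d) : startsNonProj ((p.cons e').cons e) ↔ startsNonProj (p.cons e') := by
  rw [startsNonProj]

theorem startsNonProj_cons {a b c : FreeOb G} {p : Quiver.Path a b} (h : startsNonProj p)
    (e : b ⟶ c) : startsNonProj (p.cons e) := by
  cases p with
  | nil => simp [startsNonProj] at h
  | cons q f => exact (startsNonProj_cons_cons q f e).2 h

inductive NormalForm (G : GenData) : FreeOb G → FreeOb G → Type
  | base {a b : FreeOb G} (η : a.toP ⟶ b.toP) : NormalForm G a b
  | node {a b : FreeOb G} (m : ℕ+) (η : a.toP ⟶ FreeST.of emptyGen m)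
      (φ : FreeST.of G m ⟶ b.toST) (hφ : startsNonProj φ) : NormalForm G a b

namespace NormalForm

def toHom {a b : FreeOb G} : NormalForm G a b → (a.toST ⟶ b.toST)
  | base η => (Jfree G).map η
  | node _ η φ _ => (Jfree G).map η ≫ φ

def cons {a : FreeOb G} {x y : ℕ+} : NormalForm G a ⟨x⟩ → Arr G x y → NormalForm G a ⟨y⟩
  | node m η φ h, e => node m η (φ.cons e) (startsNonProj_cons h e)
  | base η, .gen α =>
      node x η _ ((startsNonProj_toPath (a := ⟨x⟩) (b := ⟨y⟩) (Arr.gen α)).2 trivial)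
  | base η, .proj h k => base (η ≫ (projArr emptyGen h k).toPath)

theorem toHom_cons {a : FreeOb G} {x y : ℕ+} (N : NormalForm G a ⟨x⟩) (e : Arr G x y) :
    (N.cons e).toHom = N.toHom ≫ (show Quiver.Hom (V := FreeOb G) ⟨x⟩ ⟨y⟩ from e).toPath := by
  cases N <;> cases e <;> rfl

def precomp {a' a b : FreeOb G} (ψ : a'.toP ⟶ a.toP) : NormalForm G a b → NormalForm G a' b
  | base η => base (ψ ≫ η)
  | node m η φ h => node m (ψ ≫ η) φ h

theorem precomp_cons {a' a : FreeOb G} {x y : ℕ+} (ψ : a'.toP ⟶ a.toP)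
    (N : NormalForm G a ⟨x⟩) (e : Arr G x y) :
    (N.precomp ψ).cons e = (N.cons e).precomp ψ := by
  cases N with
  | node => rfl
  | base η => cases e with
    | gen => rfl
    | proj => exact congrArg base (Category.assoc _ _ _)

end NormalForm

def normalize {a : FreeOb G} : ∀ {b : FreeOb G}, Quiver.Path a b → NormalForm G a b
  | _, .nil => .base (𝟙 _)
  | _, .cons p e => (normalize p).cons e

theorem toHom_normalize {a : FreeOb G} :
    ∀ {b : FreeOb G} (χ : Quiver.Path a b), (normalize χ).toHom = χ
  | _, .nil => (Jfree G).map_id _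
  | _, .cons p e => (NormalForm.toHom_cons _ e).trans (congrArg (·.cons e) (toHom_normalize p))

theorem normalize_jfree_map {a : FreeOb G} :
    ∀ {b : FreeOb emptyGen} (ψ : Quiver.Path (V := FreeOb emptyGen) a b),
      normalize (G := G) ((Jfree G).map ψ) = .base ψ
  | _, .nil => rfl
  | ⟨_⟩, .cons p (.proj h k) => congrArg (·.cons (Arr.proj h k)) (normalize_jfree_map p)
  | _, .cons _ (.gen α) => α.elim

theorem normalize_jfree_map_comp {a' a : FreeOb G} (ψ : a'.toP ⟶ a.toP) :
    ∀ {b : FreeOb G} (χ : Quiver.Path a b),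
      normalize ((Jfree G).map ψ ≫ χ) = (normalize χ).precomp ψ
  | _, .nil => normalize_jfree_map (G := G) ψ
  | ⟨_⟩, .cons p e => (congrArg (·.cons e) (normalize_jfree_map_comp ψ p)).trans
      (NormalForm.precomp_cons ψ (normalize p) e)

theorem normalize_of_startsNonProj {a : FreeOb G} :
    ∀ {b : FreeOb G} (φ : Quiver.Path a b) (h : startsNonProj φ),
      normalize φ = .node a.val (𝟙 a.toP) φ h
  | _, .nil, h => by simp [startsNonProj] at h
  | ⟨_⟩, .cons .nil (.gen _), _ => rfl
  | ⟨_⟩, .cons .nil (.proj _ _), h => ((startsNonProj_toPath _).1 h).elim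
  | ⟨_⟩, .cons (.cons p e') e, h => congrArg (·.cons e)
      (normalize_of_startsNonProj (p.cons e') ((startsNonProj_cons_cons p e' e).1 h))

end Normalization

section Decomposition

variable {G : GenData} {n : ℕ+} {H : Type*} [Category* H] [HasColimitsOfSize.{0, 0} H]

/-- The set `C_n` of the paper. -/
abbrev StartsNonProjHom (G : GenData) (n : ℕ+) : Type :=
  Σ m : ℕ+, {φ : FreeST.of G m ⟶ FreeST.of G n // startsNonProj φ}

variable (G n) in
abbrev decompObj (Y : PCat ⥤ H) : H :=
  Y.obj (FreeST.of emptyGen n) ⨿ ∐ fun x : StartsNonProjHom G n => Y.obj (FreeST.of emptyGen x.1)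

def NormalForm.toDecompObj (Y : PCat ⥤ H) {a : FreeOb G} :
    NormalForm G a ⟨n⟩ → (Y.obj a.toP ⟶ decompObj G n Y)
  | .base η => Y.map η ≫ coprod.inl
  | .node m η φ h => Y.map η ≫
      Sigma.ι (fun x : StartsNonProjHom G n => Y.obj (FreeST.of emptyGen x.1)) ⟨m, φ, h⟩ ≫
        coprod.inr

theorem NormalForm.toDecompObj_precomp (Y : PCat ⥤ H) {a' a : FreeOb G} (ψ : a'.toP ⟶ a.toP)
    (N : NormalForm G a ⟨n⟩) : (N.precomp ψ).toDecompObj Y = Y.map ψ ≫ N.toDecompObj Y := by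
  cases N <;> exact Y.map_comp_assoc _ _ _

theorem NormalForm.toDecompObj_naturality {Y Y' : PCat ⥤ H} (f : Y ⟶ Y') {a : FreeOb G}
    (N : NormalForm G a ⟨n⟩) :
    f.app a.toP ≫ N.toDecompObj Y' = N.toDecompObj Y ≫ coprod.map (f.app _)
      (Limits.Sigma.map fun x : StartsNonProjHom G n => f.app (FreeST.of emptyGen x.1)) := by
  cases N with
  | base η =>
    erw [Category.assoc, coprod.inl_map]
    exact (f.naturality_assoc η _).symm
  | node => simp [toDecompObj]

variable (G n) in
def decompCocone (Y : PCat ⥤ H) :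
    Cocone (CostructuredArrow.proj (Jfree G) (FreeST.of G n) ⋙ Y) where
  pt := decompObj G n Y
  ι.app g := (normalize g.hom).toDecompObj Y
  ι.naturality g g' γ := by
    dsimp
    erw [Category.comp_id, ← CostructuredArrow.w γ, normalize_jfree_map_comp,
      NormalForm.toDecompObj_precomp]
    rfl

variable (G n) in
/-- The terminal objects of the components of `J ↓ [n]`. -/
def decompRoot : Option (StartsNonProjHom G n) → CostructuredArrow (Jfree G) (FreeST.of G n)
  | none => .mk (Y := FreeST.of emptyGen n) (𝟙 _)
  | some x => .mk (Y := FreeST.of emptyGen x.1) x.2.1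

theorem decompCocone_ι_app_decompRoot_none (Y : PCat ⥤ H) :
    (decompCocone G n Y).ι.app (decompRoot G n none) = coprod.inl :=
  (Y.map_id _ =≫ _).trans (Category.id_comp _)

theorem decompCocone_ι_app_decompRoot_some (Y : PCat ⥤ H) (x : StartsNonProjHom G n) :
    (decompCocone G n Y).ι.app (decompRoot G n (some x)) =
      Sigma.ι (fun x : StartsNonProjHom G n => Y.obj (FreeST.of emptyGen x.1)) x ≫
        coprod.inr := by
  show (normalize x.2.1).toDecompObj Y = _
  rw [normalize_of_startsNonProj x.2.1 x.2.2]
  exact (Y.map_id _ =≫ _).trans (Category.id_comp _)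

theorem exists_hom_decompRoot (g : CostructuredArrow (Jfree G) (FreeST.of G n)) :
    ∃ i, Nonempty (g ⟶ decompRoot G n i) := by
  have hχ := toHom_normalize g.hom
  cases hN : normalize g.hom with
  | base η =>
    rw [hN] at hχ
    exact ⟨none, ⟨CostructuredArrow.homMk η ((Category.comp_id _).trans hχ)⟩⟩
  | node m η φ h =>
    rw [hN] at hχ
    exact ⟨some ⟨m, φ, h⟩, ⟨CostructuredArrow.homMk η hχ⟩⟩

def isColimitDecompCofan (Y : PCat ⥤ H) :
    IsColimit (Cofan.mk (decompCocone G n Y).pt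
      fun i => (decompCocone G n Y).ι.app (decompRoot G n i)) :=
  Cofan.IsColimit.mk _ (fun t => coprod.desc (t.inj none) (Sigma.desc fun x => t.inj (some x)))
    (by
      rintro t (_ | x) <;> rw [cofan_mk_inj]
      · erw [decompCocone_ι_app_decompRoot_none, coprod.inl_desc]
      · erw [decompCocone_ι_app_decompRoot_some, Category.assoc, coprod.inr_desc,
          Sigma.ι_desc])
    (fun t m hm => by
      simp only [cofan_mk_inj] at hm
      refine coprod.hom_ext ?_ (Sigma.hom_ext _ _ fun x => ?_)
      · erw [coprod.inl_desc, ← hm none, decompCocone_ι_app_decompRoot_none]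
        rfl
      · erw [coprod.inr_desc, Sigma.ι_desc, ← hm (some x), decompCocone_ι_app_decompRoot_some,
          Category.assoc]
        rfl)

def isColimitDecompCocone (Y : PCat ⥤ H) : IsColimit (decompCocone G n Y) :=
  isColimitOfIsColimitCofanOfNonemptyHom _ (decompRoot G n) (isColimitDecompCofan Y)
    exists_hom_decompRoot

variable (G n) in
def decompIso (Y : PCat ⥤ H) :
    colimit (CostructuredArrow.proj (Jfree G) (FreeST.of G n) ⋙ Y) ≅ decompObj G n Y :=
  (colimit.isColimit _).coconePointUniqueUpToIso (isColimitDecompCocone Y)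

theorem colimMap_comp_decompIso_hom {Y Y' : PCat ⥤ H} (f : Y ⟶ Y') :
    colimMap (Functor.whiskerLeft (CostructuredArrow.proj (Jfree G) (FreeST.of G n)) f) ≫
        (decompIso G n Y').hom =
      (decompIso G n Y).hom ≫ coprod.map (f.app (FreeST.of emptyGen n))
        (Limits.Sigma.map fun x : StartsNonProjHom G n => f.app (FreeST.of emptyGen x.1)) :=
  colimit.hom_ext fun g => by
    erw [ι_colimMap_assoc, colimit.comp_coconePointUniqueUpToIso_hom,
      colimit.comp_coconePointUniqueUpToIso_hom_assoc]
    exact NormalForm.toDecompObj_naturality f (normalize g.hom)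

end Decomposition

theorem lan_along_J_decomposition (G : GenData) (n : ℕ+) :
    ∃ e : ∀ Y : PCat ⥤ SSet,
        ((Jfree G).lan.obj Y).obj (FreeST.of G n) ≅
          Y.obj (FreeST.of emptyGen n) ⨿
            (∐ fun x : (Σ m : ℕ+, {φ : FreeST.of G m ⟶ FreeST.of G n // startsNonProj φ}) =>
              Y.obj (FreeST.of emptyGen x.1)),
      ∀ (Y Y' : PCat ⥤ SSet) (f : Y ⟶ Y'),
        ((Jfree G).lan.map f).app (FreeST.of G n) ≫ (e Y').hom =
          (e Y).hom ≫
            Limits.coprod.map (f.app (FreeST.of emptyGen n))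
              (Limits.Sigma.map fun x => f.app (FreeST.of emptyGen x.1)) := by
  refine ⟨fun Y => (Jfree G).leftKanExtensionObjIsoColimit Y _ ≪≫ decompIso G n Y,
    fun Y Y' f => ?_⟩
  erw [Iso.trans_hom, Iso.trans_hom, ← Category.assoc,
    lan_map_app_comp_leftKanExtensionObjIsoColimit_hom, Category.assoc,
    colimMap_comp_decompIso_hom, Category.assoc]

end SemiThPaper
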